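/- arXiv:2502.05349 — 3 statements merged into one kernel-verified Lean document; each statement's English description precedes it below -/
import Mathlib

section
/- For probability measures P and Q on a measurable space Ω, and a reproducing kernel Hilbert space H with kernel k such that the mean embeddings μ_P = E_{ω∼P}[k(·,ω)] and μ_Q = E_{η∼Q}[k(·,η)] exist in H, the squared maximum mean discrepancy satisfies MMD²(P,Q) = ‖μ_P − μ_Q‖²_H = E_{(ω,ω')∼P×P}[k(ω,ω')] + E_{(η,η')∼Q×Q}[k(η,η')] − 2·E_{ω∼P, η∼Q}[k(ω,η)]. -/
open MeasureTheory
open scoped RealInnerProductSpace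

/-- For probability measures `P`, `Q` on `Ω` and an RKHS `H` with kernel
`k ω η = ⟪φ ω, φ η⟫` (feature map `φ`), if the mean embeddings `μ_P = ∫ φ dP` and
`μ_Q = ∫ φ dQ` exist, then
`MMD²(P,Q) = ‖μ_P − μ_Q‖² = E_{P×P}[k] + E_{Q×Q}[k] − 2 E_{P×Q}[k]`. -/
theorem stmt_0 {Ω H : Type*} [MeasurableSpace Ω]
    [NormedAddCommGroup H] [InnerProductSpace ℝ H] [CompleteSpace H]
    (φ : Ω → H) (P Q : Measure Ω)
    [IsProbabilityMeasure P] [IsProbabilityMeasure Q]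
    (hP : Integrable φ P) (hQ : Integrable φ Q) :
    (⨆ g : {g : H // ‖g‖ ≤ 1},
        |(∫ ω, ⟪(g : H), φ ω⟫ ∂P) - ∫ η, ⟪(g : H), φ η⟫ ∂Q|) ^ 2
      = ‖(∫ ω, φ ω ∂P) - ∫ η, φ η ∂Q‖ ^ 2
    ∧ ‖(∫ ω, φ ω ∂P) - ∫ η, φ η ∂Q‖ ^ 2
      = (∫ ω, ∫ ω', ⟪φ ω, φ ω'⟫ ∂P ∂P) + (∫ η, ∫ η', ⟪φ η, φ η'⟫ ∂Q ∂Q)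
        - 2 * ∫ ω, ∫ η, ⟪φ ω, φ η⟫ ∂Q ∂P := by
  set μP : H := ∫ ω, φ ω ∂P with hμP
  set μQ : H := ∫ η, φ η ∂Q with hμQ
  have hkey : ∀ g : H, (∫ ω, ⟪g, φ ω⟫ ∂P) - ∫ η, ⟪g, φ η⟫ ∂Q = ⟪g, μP - μQ⟫ := by
    intro g
    rw [integral_inner hP g, integral_inner hQ g, inner_sub_right]
  constructor
  · -- sup part
    have hsup : (⨆ g : {g : H // ‖g‖ ≤ 1},
        |(∫ ω, ⟪(g : H), φ ω⟫ ∂P) - ∫ η, ⟪(g : H), φ η⟫ ∂Q|) = ‖μP - μQ‖ := by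
      have hne : Nonempty {g : H // ‖g‖ ≤ 1} := ⟨⟨0, by simp⟩⟩
      apply le_antisymm
      · apply ciSup_le
        intro g
        rw [hkey]
        calc |⟪(g : H), μP - μQ⟫| ≤ ‖(g : H)‖ * ‖μP - μQ‖ := abs_real_inner_le_norm _ _
          _ ≤ 1 * ‖μP - μQ‖ := by
              exact mul_le_mul_of_nonneg_right g.2 (norm_nonneg _)
          _ = ‖μP - μQ‖ := one_mul _
      · by_cases h : μP - μQ = 0
        · rw [h, norm_zero]
          have := hne
          apply Real.iSup_nonneg
          intro g; exact abs_nonneg _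
        · have hn : ‖μP - μQ‖ ≠ 0 := norm_ne_zero_iff.mpr h
          have hbdd : BddAbove (Set.range fun g : {g : H // ‖g‖ ≤ 1} =>
              |(∫ ω, ⟪(g : H), φ ω⟫ ∂P) - ∫ η, ⟪(g : H), φ η⟫ ∂Q|) := by
            refine ⟨‖μP - μQ‖, ?_⟩
            rintro x ⟨g, rfl⟩
            dsimp only
            rw [hkey]
            calc |⟪(g : H), μP - μQ⟫| ≤ ‖(g : H)‖ * ‖μP - μQ‖ := abs_real_inner_le_norm _ _
              _ ≤ 1 * ‖μP - μQ‖ := mul_le_mul_of_nonneg_right g.2 (norm_nonneg _)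
              _ = ‖μP - μQ‖ := one_mul _
          have hg1 : ‖‖μP - μQ‖⁻¹ • (μP - μQ)‖ ≤ 1 := by
            rw [norm_smul, norm_inv, norm_norm, inv_mul_cancel₀ hn]
          have := le_ciSup hbdd ⟨‖μP - μQ‖⁻¹ • (μP - μQ), hg1⟩
          refine le_trans ?_ this
          rw [hkey]
          rw [real_inner_smul_left, real_inner_self_eq_norm_sq]
          rw [abs_of_nonneg (by positivity)]
          rw [pow_two, ← mul_assoc, inv_mul_cancel₀ hn, one_mul]
    rw [hsup]
  · -- expansion part
    have hPP : (∫ ω, ∫ ω', ⟪φ ω, φ ω'⟫ ∂P ∂P) = ⟪μP, μP⟫ := by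
      have h1 : ∀ ω, (∫ ω', ⟪φ ω, φ ω'⟫ ∂P) = ⟪φ ω, μP⟫ := fun ω => integral_inner hP _
      simp_rw [h1]
      rw [show (fun ω => ⟪φ ω, μP⟫) = fun ω => ⟪μP, φ ω⟫ from
        funext fun ω => real_inner_comm _ _, integral_inner hP μP]
    have hQQ : (∫ η, ∫ η', ⟪φ η, φ η'⟫ ∂Q ∂Q) = ⟪μQ, μQ⟫ := by
      have h1 : ∀ η, (∫ η', ⟪φ η, φ η'⟫ ∂Q) = ⟪φ η, μQ⟫ := fun η => integral_inner hQ _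
      simp_rw [h1]
      rw [show (fun η => ⟪φ η, μQ⟫) = fun η => ⟪μQ, φ η⟫ from
        funext fun η => real_inner_comm _ _, integral_inner hQ μQ]
    have hPQ : (∫ ω, ∫ η, ⟪φ ω, φ η⟫ ∂Q ∂P) = ⟪μP, μQ⟫ := by
      have h1 : ∀ ω, (∫ η, ⟪φ ω, φ η⟫ ∂Q) = ⟪φ ω, μQ⟫ := fun ω => integral_inner hQ _
      simp_rw [h1]
      rw [show (fun ω => ⟪φ ω, μQ⟫) = fun ω => ⟪μQ, φ ω⟫ from
        funext fun ω => real_inner_comm _ _, integral_inner hP μQ, real_inner_comm]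
    rw [hPP, hQQ, hPQ, @norm_sub_sq_real, real_inner_self_eq_norm_sq,
      real_inner_self_eq_norm_sq]
    ring
end

section
/- For a fixed positive integer K and compact Ω ⊆ ℝ^p, any continuous function ℓ: Ω^K × Ω → ℝ that is permutation-invariant in its first K arguments admits a sum-decomposable representation: there exist a continuous map τ: ℝ^p → ℝ^{N} with N = C(K+p, p) − 1 and a continuous map ρ: ℝ^N × ℝ^N → ℝ such that ℓ(ζ_1,…,ζ_K, ω) = ρ((1/K)∑_{k=1}^K τ(ζ_k), τ(ω)) for all ζ_1,…,ζ_K ∈ Ω and ω ∈ Ω. -/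
/-!
Let `τ` be the degree-`K` Veronese map of the homogenised point `(1, x)`, without its constant
coordinate; it has `C(K + p, p) - 1` coordinates. Its mean over `ζ₁, …, ζ_K` determines
`∑ₖ Q(ζₖ)` for every polynomial `Q` of degree at most `K`, in particular the power sums
`∑ₖ f(ζₖ)^j`, `j ≤ K`, of any linear functional `f`. By Newton's identities these determine the
multiset of the `f(ζₖ)`, and for `f` injective on the finitely many points involved, the multiset
of the `ζₖ`. So `ℓ`, being symmetric, is constant on the fibres of the continuous map
`(ζ, ω) ↦ (mean of τ(ζₖ), τ ω)` on the compact set `Ω^K × Ω`, hence factors through it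
continuously on the (closed) image, and Tietze extends the factor to all of `ℝ^N × ℝ^N`.
-/

open Finset MvPolynomial

noncomputable section

theorem Fintype.exists_perm_comp_eq_of_map_univ_eq {ι α : Type*} [Fintype ι] [DecidableEq α]
    {f g : ι → α} (h : univ.val.map f = univ.val.map g) : ∃ σ : Equiv.Perm ι, f ∘ σ = g := by
  have hfiber (a : α) : Fintype.card {i // g i = a} = Fintype.card {i // f i = a} := by
    have := congrArg (Multiset.count a) h
    simp only [Multiset.count_map, Fintype.card_subtype] at this ⊢
    simpa [Finset.card, eq_comm] using this.symm
  exact ⟨Equiv.ofFiberEquiv fun a => Fintype.equivOfCardEq (hfiber a),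
    funext (Equiv.ofFiberEquiv_map _)⟩

theorem Multiset.eq_of_esymm_eq {R : Type*} [CommRing R] [IsDomain R] {s t : Multiset R} {n : ℕ}
    (hs : Multiset.card s = n) (ht : Multiset.card t = n) (h : ∀ k ≤ n, s.esymm k = t.esymm k) :
    s = t := by
  have hprod : (s.map fun r => Polynomial.X - Polynomial.C r).prod
      = (t.map fun r => Polynomial.X - Polynomial.C r).prod := by
    rw [Multiset.prod_X_sub_X_eq_sum_esymm, Multiset.prod_X_sub_X_eq_sum_esymm, hs, ht]
    exact sum_congr rfl fun k hk => by rw [h k (Nat.lt_succ_iff.mp (mem_range.mp hk))]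
  simpa only [Polynomial.roots_multiset_prod_X_sub_C] using congrArg Polynomial.roots hprod

section Newton

variable {σ R : Type*} [Fintype σ] [CommRing R] [IsDomain R] [CharZero R] {x y : σ → R}

theorem MvPolynomial.aeval_esymm_eq_of_sum_pow_eq
    (h : ∀ k ≤ Fintype.card σ, ∑ i, x i ^ k = ∑ i, y i ^ k) :
    ∀ k ≤ Fintype.card σ, aeval x (esymm σ R k) = aeval y (esymm σ R k) := by
  intro k
  induction k using Nat.strong_induction_on with
  | _ k ih =>
    intro hk
    rcases Nat.eq_zero_or_pos k with rfl | hk0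
    · simp
    have newton (z : σ → R) := congrArg (aeval z) (mul_esymm_eq_sum σ R k)
    simp only [map_mul, map_natCast, map_pow, map_neg, map_one, map_sum] at newton
    refine mul_left_cancel₀ (Nat.cast_ne_zero.mpr hk0.ne' : (k : R) ≠ 0) ?_
    rw [newton x, newton y]
    congr 1
    refine sum_congr rfl fun a ha => ?_
    obtain ⟨hmem, ha1⟩ := mem_filter.mp ha
    have hsum : a.1 + a.2 = k := HasAntidiagonal.mem_antidiagonal.mp hmem
    have hpsum (z : σ → R) : aeval z (psum σ R a.2) = ∑ i, z i ^ a.2 := by simp [psum]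
    rw [ih a.1 ha1 (by omega), hpsum, hpsum, h a.2 (by omega)]

theorem Finset.univ_val_map_eq_of_sum_pow_eq
    (h : ∀ k ≤ Fintype.card σ, ∑ i, x i ^ k = ∑ i, y i ^ k) :
    univ.val.map x = univ.val.map y := by
  refine Multiset.eq_of_esymm_eq (n := Fintype.card σ) (by simp) (by simp) fun k hk => ?_
  rw [← aeval_esymm_eq_multiset_esymm σ R, ← aeval_esymm_eq_multiset_esymm σ R]
  exact aeval_esymm_eq_of_sum_pow_eq h k hk

end Newton

theorem Module.Dual.exists_injOn {k E : Type*} [Field k] [Infinite k] [AddCommGroup E]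
    [Module k E] {S : Set E} (hS : S.Finite) : ∃ f : Module.Dual k E, Set.InjOn f S := by
  have := hS.offDiag.fintype
  let ker (q : S.offDiag) : Submodule k (Module.Dual k E) :=
    LinearMap.ker (Module.Dual.eval k E (q.1.1 - q.1.2))
  have hproper (q : S.offDiag) : ker q ≠ ⊤ := by
    obtain ⟨f, hf⟩ := not_forall.mp ((Module.forall_dual_apply_eq_zero_iff k _).not.mpr
      (sub_ne_zero.mpr q.2.2.2))
    exact fun htop => hf (LinearMap.mem_ker.mp (htop ▸ Submodule.mem_top : f ∈ ker q))
  obtain ⟨f, hf⟩ : ∃ f, f ∉ ⋃ q, (ker q : Set (Module.Dual k E)) := by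
    by_contra! hcov
    obtain ⟨q, hq⟩ := Subspace.exists_eq_top_of_iUnion_eq_univ (Set.eq_univ_of_forall hcov)
    exact hproper q hq
  refine ⟨f, fun a ha b hb hab => by_contra fun hne => hf (Set.mem_iUnion.mpr ?_)⟩
  exact ⟨⟨(a, b), ha, hb, hne⟩, by simp [ker, hab]⟩

section Veronese

abbrev veroneseIndex (p n : ℕ) : Finset (Fin (p + 1) →₀ ℕ) :=
  (univ.finsuppAntidiag n).erase (Finsupp.single 0 n)

theorem card_veroneseIndex (p n : ℕ) : #(veroneseIndex p n) = (n + p).choose p - 1 := by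
  rw [card_erase_of_mem (by simp [mem_finsuppAntidiag]), card_finsuppAntidiag_nat_eq_choose,
    card_univ, Fintype.card_fin, Nat.add_right_comm, Nat.add_sub_cancel, add_comm p,
    Nat.choose_symm_add]

variable {R : Type*} [CommRing R] {p n : ℕ}

/-- The degree-`n` monomials of `(1, x)`, the coordinate `0` being the homogenising one; the
constant monomial `X 0 ^ n` is left out. -/
def veronese (n : ℕ) (x : Fin p → R) : veroneseIndex p n → R :=
  fun d => eval (Fin.cons 1 x) (monomial d.1 1)

theorem continuous_veronese [TopologicalSpace R] [IsTopologicalRing R] (n : ℕ) :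
    Continuous (veronese (R := R) (p := p) n) :=
  continuous_pi fun _ => (continuous_eval _).comp (continuous_const.finCons continuous_id)

variable {ι : Type*} [Fintype ι] {ζ ζ' : ι → Fin p → R}

theorem sum_eval_eq_of_sum_veronese_eq (h : ∑ i, veronese n (ζ i) = ∑ i, veronese n (ζ' i))
    {Q : MvPolynomial (Fin (p + 1)) R} (hQ : Q.IsHomogeneous n) :
    ∑ i, eval (Fin.cons 1 (ζ i)) Q = ∑ i, eval (Fin.cons 1 (ζ' i)) Q := by
  have hsum (z : ι → Fin p → R) : ∑ i, eval (Fin.cons 1 (z i)) Q =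
      ∑ d ∈ Q.support, Q.coeff d * ∑ i, eval (Fin.cons 1 (z i)) (monomial d 1) := by
    conv_lhs => enter [2, i]; rw [Q.as_sum, map_sum]
    rw [sum_comm]
    exact sum_congr rfl fun d _ => by simp only [eval_monomial, one_mul, mul_sum]
  rw [hsum, hsum]
  refine sum_congr rfl fun d hd => ?_
  by_cases hconst : d = Finsupp.single 0 n
  · subst hconst
    simp [eval_monomial]
  · have hd' : d ∈ veroneseIndex p n := by
      refine mem_erase.mpr ⟨hconst, mem_finsuppAntidiag.mpr ⟨?_, subset_univ _⟩⟩
      simpa [Finsupp.weight_apply, Finsupp.sum_fintype] using hQ (mem_support_iff.mp hd)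
    have hcoord := congrFun h ⟨d, hd'⟩
    simp only [Finset.sum_apply, veronese] at hcoord
    rw [hcoord]

theorem sum_pow_dual_eq_of_sum_veronese_eq (h : ∑ i, veronese n (ζ i) = ∑ i, veronese n (ζ' i))
    (f : Module.Dual R (Fin p → R)) {k : ℕ} (hk : k ≤ n) :
    ∑ i, f (ζ i) ^ k = ∑ i, f (ζ' i) ^ k := by
  let L : MvPolynomial (Fin (p + 1)) R := ∑ j, C (f (Pi.single j 1)) * X j.succ
  have hL : L.IsHomogeneous 1 :=
    IsHomogeneous.sum _ _ _ fun j _ => (isHomogeneous_X R j.succ).C_mul _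
  have hQ : (L ^ k * X 0 ^ (n - k)).IsHomogeneous n := by
    simpa [Nat.add_sub_cancel' hk] using (hL.pow k).mul ((isHomogeneous_X R 0).pow (n - k))
  have heval (x : Fin p → R) : eval (Fin.cons 1 x) (L ^ k * X 0 ^ (n - k)) = f x ^ k := by
    have hfx : f x = ∑ j, f (Pi.single j 1) * x j := by
      conv_lhs => rw [← univ_sum_single x, map_sum]
      refine sum_congr rfl fun j _ => ?_
      rw [mul_comm, ← smul_eq_mul, ← map_smul, ← Pi.single_smul, smul_eq_mul, mul_one]
    simp [L, hfx]
  simpa only [heval] using sum_eval_eq_of_sum_veronese_eq h hQ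

end Veronese

section VeroneseField

variable {R : Type*} [Field R] [CharZero R] {p n : ℕ}

theorem exists_perm_comp_eq_of_sum_veronese_eq {ι : Type*} [Fintype ι]
    (hn : Fintype.card ι ≤ n) {ζ ζ' : ι → Fin p → R}
    (h : ∑ i, veronese n (ζ i) = ∑ i, veronese n (ζ' i)) : ∃ σ : Equiv.Perm ι, ζ ∘ σ = ζ' := by
  classical
  obtain ⟨f, hf⟩ :=
    Module.Dual.exists_injOn (k := R) ((Set.finite_range ζ).union (Set.finite_range ζ'))
  obtain ⟨σ, hσ⟩ := Fintype.exists_perm_comp_eq_of_map_univ_eq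
    (univ_val_map_eq_of_sum_pow_eq (x := f ∘ ζ) (y := f ∘ ζ') fun k hk =>
      sum_pow_dual_eq_of_sum_veronese_eq h f (hk.trans hn))
  exact ⟨σ, funext fun i => hf (Or.inl ⟨σ i, rfl⟩) (Or.inr ⟨i, rfl⟩) (congrFun hσ i)⟩

theorem eq_of_veronese_eq (hn : 1 ≤ n) {x y : Fin p → R} (h : veronese n x = veronese n y) :
    x = y := by
  obtain ⟨_, hσ⟩ := exists_perm_comp_eq_of_sum_veronese_eq (ι := Unit) hn (ζ := fun _ => x)
    (ζ' := fun _ => y) (by simpa using h)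
  exact congrFun hσ ()

end VeroneseField

theorem exists_continuousMap_comp_eq_of_isCompact {X Y : Type*} [TopologicalSpace X]
    [TopologicalSpace Y] [T2Space Y] [NormalSpace Y] {s : Set X} (hs : IsCompact s) {Φ : X → Y}
    (hΦ : ContinuousOn Φ s) {f : X → ℝ} (hf : ContinuousOn f s)
    (hfiber : ∀ a ∈ s, ∀ b ∈ s, Φ a = Φ b → f a = f b) :
    ∃ g : C(Y, ℝ), ∀ a ∈ s, f a = g (Φ a) := by
  have : CompactSpace s := isCompact_iff_compactSpace.mp hs
  let Φs : C(s, Φ '' s) := ⟨fun a => ⟨Φ a, a, a.2, rfl⟩, hΦ.domRestrict.subtype_mk _⟩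
  have hquot : Topology.IsQuotientMap Φs := Φs.continuous.isClosedMap.isQuotientMap Φs.continuous
    (by rintro ⟨_, a, ha, rfl⟩; exact ⟨⟨a, ha⟩, rfl⟩)
  let fs : C(s, ℝ) := ⟨s.domRestrict f, hf.domRestrict⟩
  have hfs : Function.FactorsThrough fs Φs := fun a b hab =>
    hfiber a a.2 b b.2 (congrArg Subtype.val hab)
  obtain ⟨g, hg⟩ := ContinuousMap.exists_restrict_eq (hs.image_of_continuousOn hΦ).isClosed
    (hquot.lift fs hfs)
  refine ⟨g, fun a ha => ?_⟩
  calc f a = (hquot.lift fs hfs).comp Φs ⟨a, ha⟩ := by rw [hquot.lift_comp]; rfl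
    _ = g (Φ a) := by rw [← hg]; rfl

def veroneseEquiv (p n : ℕ) :
    EuclideanSpace ℝ (Fin ((n + p).choose p - 1)) ≃ₗ[ℝ] (veroneseIndex p n → ℝ) :=
  (WithLp.linearEquiv 2 ℝ _).trans
    (LinearEquiv.funCongrLeft ℝ ℝ ((veroneseIndex p n).equivFinOfCardEq (card_veroneseIndex p n)))

end

/-- (Sum-decomposable representation of permutation-invariant functions.)
For fixed `K ≥ 1` and compact `Ω ⊆ ℝ^p`, any continuous `ℓ : Ω^K × Ω → ℝ` that is
permutation-invariant in its first `K` arguments can be written as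
`ℓ(ζ₁,…,ζ_K, ω) = ρ((1/K) ∑ₖ τ(ζₖ), τ(ω))` with continuous `τ : ℝ^p → ℝ^N`,
`N = C(K+p, p) − 1`, and continuous `ρ : ℝ^N × ℝ^N → ℝ`. -/
theorem stmt_9 (p K : ℕ) (hK : 0 < K)
    (Ω : Set (EuclideanSpace ℝ (Fin p))) (hΩ : IsCompact Ω)
    (ℓ : (Fin K → EuclideanSpace ℝ (Fin p)) → EuclideanSpace ℝ (Fin p) → ℝ)
    (hcont : ContinuousOn (fun q : (Fin K → EuclideanSpace ℝ (Fin p)) × EuclideanSpace ℝ (Fin p) => ℓ q.1 q.2)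
      ((Set.univ.pi fun _ : Fin K => Ω) ×ˢ Ω))
    (hsym : ∀ σ : Equiv.Perm (Fin K), ∀ ζ : Fin K → EuclideanSpace ℝ (Fin p),
      (∀ i, ζ i ∈ Ω) → ∀ ω ∈ Ω, ℓ (ζ ∘ σ) ω = ℓ ζ ω) :
    ∃ τ : EuclideanSpace ℝ (Fin p) → EuclideanSpace ℝ (Fin ((K + p).choose p - 1)),
    ∃ ρ : EuclideanSpace ℝ (Fin ((K + p).choose p - 1)) →
            EuclideanSpace ℝ (Fin ((K + p).choose p - 1)) → ℝ,
      Continuous τ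
      ∧ Continuous (fun q : EuclideanSpace ℝ (Fin ((K + p).choose p - 1)) ×
            EuclideanSpace ℝ (Fin ((K + p).choose p - 1)) => ρ q.1 q.2)
      ∧ ∀ ζ : Fin K → EuclideanSpace ℝ (Fin p), (∀ i, ζ i ∈ Ω) → ∀ ω ∈ Ω,
          ℓ ζ ω = ρ ((K : ℝ)⁻¹ • ∑ i : Fin K, τ (ζ i)) (τ ω) := by
  let V := veroneseEquiv p K
  let τ (x : EuclideanSpace ℝ (Fin p)) := V.symm (veronese K x.ofLp)
  have hτ : Continuous τ := V.symm.continuous_of_finiteDimensional.comp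
    ((continuous_veronese K).comp (PiLp.continuous_ofLp 2 _))
  have hK' : (K : ℝ)⁻¹ ≠ 0 := inv_ne_zero (Nat.cast_ne_zero.mpr hK.ne')
  obtain ⟨g, hg⟩ := exists_continuousMap_comp_eq_of_isCompact
    ((isCompact_univ_pi fun _ => hΩ).prod hΩ)
    (Φ := fun q => ((K : ℝ)⁻¹ • ∑ i, τ (q.1 i), τ q.2)) (by fun_prop) hcont <| by
      rintro ⟨ζ, ω⟩ ⟨hζ, hω⟩ ⟨ζ', ω'⟩ - hΦ
      obtain ⟨hmean, hτω⟩ := Prod.ext_iff.mp hΦ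
      have hmoments : ∑ i, veronese K (ζ i).ofLp = ∑ i, veronese K (ζ' i).ofLp := by
        simpa [τ, map_sum] using congrArg V (smul_right_injective _ hK' hmean)
      obtain ⟨σ, hσ⟩ := exists_perm_comp_eq_of_sum_veronese_eq (by simp) hmoments
      have hζσ : ζ ∘ σ = ζ' := funext fun i => WithLp.ofLp_injective 2 (congrFun hσ i)
      have hωω' : ω = ω' := WithLp.ofLp_injective 2 (eq_of_veronese_eq hK (by simpa [τ] using hτω))
      calc ℓ ζ ω = ℓ (ζ ∘ σ) ω := (hsym σ ζ (fun i => hζ i trivial) ω hω).symm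
        _ = ℓ ζ' ω' := by rw [hζσ, hωω']
  exact ⟨τ, fun a b => g (a, b), hτ, g.continuous,
    fun ζ hζ ω hω => hg (ζ, ω) ⟨fun i _ => hζ i, hω⟩⟩
end

section
/- The empirical-measure MMD with energy kernel between two finite scenario sets {ζ_1,…,ζ_K} and {ω_1,…,ω_M} in ℝ^p is nonnegative: (2/(KM))∑_{i,j}‖ζ_i − ω_j‖ − (1/K²)∑_{i,i'}‖ζ_i − ζ_{i'}‖ − (1/M²)∑_{j,j'}‖ω_j − ω_{j'}‖ ≥ 0, with equality if and only if the empirical measures (1/K)∑_i δ_{ζ_i} and (1/M)∑_j δ_{ω_j} coincide. -/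
/-!
Write `Q(a) = ∑ᵢⱼ aᵢ aⱼ ‖xᵢ - xⱼ‖` for weights with `∑ᵢ aᵢ = 0`; the quantity `d` of the theorem is
`-Q(a)` for the signed weights of the difference of the two empirical measures on their joint
support. From `|r| = c⁻¹ ∫ (1 - exp (-t²r²)) / t² dt` (with `c > 0`) and `∑ᵢ aᵢ = 0`, the constant
terms cancel and `c Q(a) = -∫ G(t²) / t² dt`, where `G(s) = ∑ᵢⱼ aᵢ aⱼ exp (-s ‖xᵢ - xⱼ‖²)`.
The Gaussian kernel is positive semidefinite: `exp (-s‖x - y‖²)` is `exp (2s ⟪x, y⟫)` up to the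
factors `exp (-s‖x‖²) exp (-s‖y‖²)`, and the power series of `exp` reduces this to the Schur
product theorem for powers of a Gram matrix. Hence `G ≥ 0` and `Q(a) ≤ 0`. At distinct points
`G(s) → ∑ᵢ aᵢ²` as `s → ∞`, so the integral is strictly positive unless `a = 0`.
-/

open MeasureTheory Finset Filter Topology Real
open scoped InnerProductSpace ENNReal

noncomputable def absIntegrand (r t : ℝ) : ℝ := (1 - exp (-(t ^ 2 * r ^ 2))) / t ^ 2

theorem absIntegrand_nonneg (r t : ℝ) : 0 ≤ absIntegrand r t := by
  have : exp (-(t ^ 2 * r ^ 2)) ≤ 1 := exp_le_one_iff.2 (by nlinarith [sq_nonneg t, sq_nonneg r])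
  exact div_nonneg (by linarith) (sq_nonneg t)

theorem absIntegrand_one_le (u : ℝ) : absIntegrand 1 u ≤ 2 * (1 + u ^ 2)⁻¹ := by
  rcases eq_or_ne u 0 with rfl | hu
  · simp [absIntegrand]
  have hu2 : 0 < u ^ 2 := by positivity
  have h1 : 1 - exp (-(u ^ 2 * 1 ^ 2)) ≤ 1 := by linarith [exp_pos (-(u ^ 2 * 1 ^ 2))]
  have h2 : 1 - exp (-(u ^ 2 * 1 ^ 2)) ≤ u ^ 2 := by
    linarith [add_one_le_exp (-(u ^ 2 * 1 ^ 2))]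
  rw [absIntegrand, le_mul_inv_iff₀ (by positivity), div_mul_eq_mul_div, div_le_iff₀ hu2]
  nlinarith

theorem integrable_absIntegrand_one : Integrable (absIntegrand 1) := by
  refine (integrable_inv_one_add_sq.const_mul 2).mono' ?_ (ae_of_all _ fun u => ?_)
  · exact (by unfold absIntegrand; fun_prop : Measurable (absIntegrand 1)).aestronglyMeasurable
  · rw [norm_of_nonneg (absIntegrand_nonneg 1 u)]
    exact absIntegrand_one_le u

theorem integral_absIntegrand_one_pos : 0 < ∫ u, absIntegrand 1 u := by
  rw [integral_pos_iff_support_of_nonneg (absIntegrand_nonneg 1) integrable_absIntegrand_one]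
  refine lt_of_lt_of_le (by simp) (measure_mono (s := Set.Ioi 0) fun u (hu : 0 < u) => ?_)
  have : exp (-(u ^ 2 * 1 ^ 2)) < 1 := exp_lt_one_iff.2 (by simp; positivity)
  exact (div_pos (by linarith) (by positivity)).ne'

theorem absIntegrand_eq_sq_mul {r : ℝ} (hr : r ≠ 0) (t : ℝ) :
    absIntegrand r t = r ^ 2 * absIntegrand 1 (r * t) := by
  rcases eq_or_ne t 0 with rfl | ht
  · simp [absIntegrand]
  simp only [absIntegrand]
  field_simp

theorem integrable_absIntegrand (r : ℝ) : Integrable (absIntegrand r) := by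
  rcases eq_or_ne r 0 with rfl | hr
  · have : absIntegrand 0 = 0 := funext fun t => by simp [absIntegrand]
    exact this ▸ integrable_zero ℝ ℝ volume
  rw [funext (absIntegrand_eq_sq_mul hr)]
  exact (integrable_absIntegrand_one.comp_mul_left' hr).const_mul _

theorem integral_absIntegrand (r : ℝ) :
    ∫ t, absIntegrand r t = (∫ u, absIntegrand 1 u) * |r| := by
  rcases eq_or_ne r 0 with rfl | hr
  · simp [absIntegrand]
  simp_rw [absIntegrand_eq_sq_mul hr]
  rw [integral_const_mul, Measure.integral_comp_mul_left, smul_eq_mul, abs_inv, ← sq_abs]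
  field_simp

theorem Matrix.PosSemidef.sum_sum_mul_nonneg {ι : Type*} [Fintype ι] {A : Matrix ι ι ℝ}
    (hA : A.PosSemidef) (b : ι → ℝ) : 0 ≤ ∑ i, ∑ j, b i * b j * A i j := by
  simpa [dotProduct, Matrix.mulVec, mul_sum, mul_comm, mul_left_comm]
    using hA.dotProduct_mulVec_nonneg b

section GaussianForm

variable {E ι : Type*} [NormedAddCommGroup E] [Fintype ι] {x : ι → E} {a : ι → ℝ}

noncomputable def gaussianForm (x : ι → E) (a : ι → ℝ) (s : ℝ) : ℝ :=
  ∑ i, ∑ j, a i * a j * exp (-(s * ‖x i - x j‖ ^ 2))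

theorem tendsto_gaussianForm_atTop (hx : Function.Injective x) (a : ι → ℝ) :
    Tendsto (gaussianForm x a) atTop (𝓝 (∑ i, a i ^ 2)) := by
  classical
  have hlim : ∑ i, a i ^ 2 = ∑ i, ∑ j, a i * a j * if i = j then 1 else 0 := by
    simp [sq]
  rw [hlim]
  refine tendsto_finsetSum _ fun i _ => tendsto_finsetSum _ fun j _ => ?_
  refine Tendsto.const_mul _ ?_
  split_ifs with hij
  · simp [hij]
  · have hpos : 0 < ‖x i - x j‖ ^ 2 := by
      have : x i - x j ≠ 0 := sub_ne_zero.2 (hx.ne hij)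
      positivity
    exact tendsto_exp_atBot.comp
      (tendsto_neg_atTop_atBot.comp (tendsto_id.atTop_mul_const hpos))

theorem sum_sum_mul_absIntegrand (ha : ∑ i, a i = 0) (t : ℝ) :
    ∑ i, ∑ j, a i * a j * absIntegrand ‖x i - x j‖ t = -(gaussianForm x a (t ^ 2) / t ^ 2) := by
  have hmass : ∑ i, ∑ j, a i * a j = 0 := by rw [← sum_mul_sum, ha, zero_mul]
  simp only [absIntegrand, gaussianForm, mul_div_assoc', mul_sub, mul_one, sub_div,
    sum_sub_distrib, ← sum_div, hmass, zero_div, zero_sub]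

theorem integrable_gaussianForm_div_sq (ha : ∑ i, a i = 0) :
    Integrable fun t => gaussianForm x a (t ^ 2) / t ^ 2 := by
  have := integrable_finsetSum univ fun i _ => integrable_finsetSum univ fun j _ =>
    (integrable_absIntegrand ‖x i - x j‖).const_mul (a i * a j)
  simpa [sum_sum_mul_absIntegrand ha] using this.neg

theorem integral_absIntegrand_one_mul_sum_sum_mul_norm_sub (ha : ∑ i, a i = 0) :
    (∫ u, absIntegrand 1 u) * ∑ i, ∑ j, a i * a j * ‖x i - x j‖
      = -∫ t, gaussianForm x a (t ^ 2) / t ^ 2 := by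
  calc (∫ u, absIntegrand 1 u) * ∑ i, ∑ j, a i * a j * ‖x i - x j‖
      = ∫ t, ∑ i, ∑ j, a i * a j * absIntegrand ‖x i - x j‖ t := by
        rw [integral_finsetSum _ fun i _ => integrable_finsetSum _ fun j _ =>
          (integrable_absIntegrand _).const_mul _, mul_sum]
        refine sum_congr rfl fun i _ => ?_
        rw [integral_finsetSum _ fun j _ => (integrable_absIntegrand _).const_mul _, mul_sum]
        refine sum_congr rfl fun j _ => ?_
        rw [integral_const_mul, integral_absIntegrand ‖x i - x j‖, abs_norm]
        ring
    _ = -∫ t, gaussianForm x a (t ^ 2) / t ^ 2 := by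
        simp_rw [sum_sum_mul_absIntegrand ha, integral_neg]

variable [InnerProductSpace ℝ E]

theorem posSemidef_inner_pow (x : ι → E) (m : ℕ) :
    (Matrix.of fun i j => ⟪x i, x j⟫_ℝ ^ m).PosSemidef := by
  induction m with
  | zero => simpa [Matrix.gram] using Matrix.posSemidef_gram ℝ (fun _ : ι => (1 : ℝ))
  | succ m ih =>
    simpa [pow_succ, Matrix.hadamard, Matrix.gram] using ih.hadamard (Matrix.posSemidef_gram ℝ x)

theorem sum_sum_mul_exp_inner_nonneg (x : ι → E) (b : ι → ℝ) {t : ℝ} (ht : 0 ≤ t) :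
    0 ≤ ∑ i, ∑ j, b i * b j * exp (t * ⟪x i, x j⟫_ℝ) := by
  have hsum : HasSum (fun m : ℕ => ∑ i, ∑ j, b i * b j * ((t * ⟪x i, x j⟫_ℝ) ^ m / m.factorial))
      (∑ i, ∑ j, b i * b j * exp (t * ⟪x i, x j⟫_ℝ)) := by
    refine hasSum_sum fun i _ => hasSum_sum fun j _ => ?_
    rw [exp_eq_exp_ℝ]
    exact (NormedSpace.expSeries_div_hasSum_exp (t * ⟪x i, x j⟫_ℝ)).mul_left (b i * b j)
  refine hsum.nonneg fun m => ?_
  have hterm : ∀ i j, b i * b j * ((t * ⟪x i, x j⟫_ℝ) ^ m / m.factorial)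
      = t ^ m / m.factorial * (b i * b j * ⟪x i, x j⟫_ℝ ^ m) := fun i j => by ring
  simp_rw [hterm, ← mul_sum]
  exact mul_nonneg (by positivity) ((posSemidef_inner_pow x m).sum_sum_mul_nonneg b)

theorem gaussianForm_nonneg (x : ι → E) (a : ι → ℝ) {s : ℝ} (hs : 0 ≤ s) :
    0 ≤ gaussianForm x a s := by
  set b : ι → ℝ := fun i => a i * exp (-(s * ‖x i‖ ^ 2))
  have hterm : ∀ i j, a i * a j * exp (-(s * ‖x i - x j‖ ^ 2))
      = b i * b j * exp (2 * s * ⟪x i, x j⟫_ℝ) := fun i j => by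
    rw [norm_sub_sq_real, show -(s * (‖x i‖ ^ 2 - 2 * ⟪x i, x j⟫_ℝ + ‖x j‖ ^ 2))
      = -(s * ‖x i‖ ^ 2) + -(s * ‖x j‖ ^ 2) + 2 * s * ⟪x i, x j⟫_ℝ by ring, exp_add, exp_add]
    ring
  simp only [gaussianForm, hterm]
  exact sum_sum_mul_exp_inner_nonneg x b (by positivity)

theorem Fintype.sum_sum_mul_norm_sub_nonpos (x : ι → E) (ha : ∑ i, a i = 0) :
    ∑ i, ∑ j, a i * a j * ‖x i - x j‖ ≤ 0 := by
  have hG : 0 ≤ ∫ t, gaussianForm x a (t ^ 2) / t ^ 2 :=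
    integral_nonneg fun t => div_nonneg (gaussianForm_nonneg x a (sq_nonneg t)) (sq_nonneg t)
  refine nonpos_of_mul_nonpos_right ?_ integral_absIntegrand_one_pos
  linarith [integral_absIntegrand_one_mul_sum_sum_mul_norm_sub (x := x) ha]

theorem Fintype.sum_sum_mul_norm_sub_eq_zero_iff (hx : Function.Injective x)
    (ha : ∑ i, a i = 0) : ∑ i, ∑ j, a i * a j * ‖x i - x j‖ = 0 ↔ a = 0 := by
  refine ⟨fun hQ => ?_, by rintro rfl; simp⟩
  by_contra hne
  obtain ⟨i₀, hi₀⟩ := Function.ne_iff.1 hne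
  have hmass : 0 < ∑ i, a i ^ 2 :=
    sum_pos' (fun i _ => sq_nonneg _) ⟨i₀, mem_univ _, by simpa [sq] using mul_self_pos.2 hi₀⟩
  obtain ⟨T, hT⟩ := eventually_atTop.1 <| ((tendsto_gaussianForm_atTop hx a).comp
    (tendsto_pow_atTop two_ne_zero)).eventually_const_lt hmass
  have hG : 0 < ∫ t, gaussianForm x a (t ^ 2) / t ^ 2 := by
    refine (integral_pos_iff_support_of_nonneg (fun t => div_nonneg
      (gaussianForm_nonneg x a (sq_nonneg t)) (sq_nonneg t))
      (integrable_gaussianForm_div_sq ha)).2 ?_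
    refine lt_of_lt_of_le (by simp) (measure_mono (s := Set.Ioi (max T 1)) fun t ht => ?_)
    have ht1 : 0 < t := lt_of_lt_of_le one_pos ((le_max_right T 1).trans (le_of_lt ht))
    exact (div_pos (hT t ((le_max_left T 1).trans (le_of_lt ht))) (by positivity)).ne'
  have := integral_absIntegrand_one_mul_sum_sum_mul_norm_sub (x := x) ha
  rw [hQ, mul_zero] at this
  linarith

end GaussianForm

section FinsetForm

variable {E : Type*} [NormedAddCommGroup E] [InnerProductSpace ℝ E] (S : Finset E) {a : E → ℝ}

theorem Finset.sum_sum_mul_norm_sub_nonpos (ha : ∑ z ∈ S, a z = 0) :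
    ∑ z ∈ S, ∑ w ∈ S, a z * a w * ‖z - w‖ ≤ 0 := by
  simp_rw [← S.sum_coe_sort]
  exact Fintype.sum_sum_mul_norm_sub_nonpos (fun z : S => (z : E)) ((S.sum_coe_sort a).trans ha)

theorem Finset.sum_sum_mul_norm_sub_eq_zero_iff (ha : ∑ z ∈ S, a z = 0) :
    ∑ z ∈ S, ∑ w ∈ S, a z * a w * ‖z - w‖ = 0 ↔ ∀ z ∈ S, a z = 0 := by
  simp_rw [← S.sum_coe_sort, Fintype.sum_sum_mul_norm_sub_eq_zero_iff Subtype.val_injective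
    ((S.sum_coe_sort a).trans ha), funext_iff, Subtype.forall]
  rfl

end FinsetForm

theorem Finset.sum_comp_eq_sum_card_smul {κ β M : Type*} [AddCommMonoid M] [Fintype κ]
    [DecidableEq β] {f : κ → β} {S : Finset β} (hf : ∀ k, f k ∈ S) (F : β → M) :
    ∑ k, F (f k) = ∑ z ∈ S, #{k | f k = z} • F z := by
  simp_rw [← sum_const, sum_fiberwise_of_maps_to' fun k _ => hf k]

theorem Finset.sum_sum_comp_eq_sum_sum_card_mul {ι κ β : Type*} [Fintype ι] [Fintype κ]
    [DecidableEq β] {f : ι → β} {g : κ → β} {S : Finset β} (hf : ∀ i, f i ∈ S)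
    (hg : ∀ j, g j ∈ S) (k : β → β → ℝ) :
    ∑ i, ∑ j, k (f i) (g j)
      = ∑ z ∈ S, ∑ w ∈ S, (#{i | f i = z} : ℝ) * #{j | g j = w} * k z w := by
  rw [sum_comp_eq_sum_card_smul hf fun z => ∑ j, k z (g j)]
  refine sum_congr rfl fun z _ => ?_
  rw [sum_comp_eq_sum_card_smul hg, smul_sum]
  simp only [nsmul_eq_mul, mul_assoc]

theorem Finset.sum_sum_smul_sub_mul_smul_sub {β : Type*} (S : Finset β) {k : β → β → ℝ}
    (hk : ∀ z w, k z w = k w z) (u v : β → ℝ) (s t : ℝ) :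
    ∑ z ∈ S, ∑ w ∈ S, (s * u z - t * v z) * (s * u w - t * v w) * k z w
      = s ^ 2 * ∑ z ∈ S, ∑ w ∈ S, u z * u w * k z w
        - 2 * s * t * ∑ z ∈ S, ∑ w ∈ S, u z * v w * k z w
        + t ^ 2 * ∑ z ∈ S, ∑ w ∈ S, v z * v w * k z w := by
  have hswap : ∑ z ∈ S, ∑ w ∈ S, v z * u w * k z w = ∑ z ∈ S, ∑ w ∈ S, u z * v w * k z w := by
    rw [sum_comm]
    simp only [hk, mul_comm (v _)]
  have hterm : ∀ z w, (s * u z - t * v z) * (s * u w - t * v w) * k z w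
      = s ^ 2 * (u z * u w * k z w) - s * t * (u z * v w * k z w)
        - s * t * (v z * u w * k z w) + t ^ 2 * (v z * v w * k z w) := fun z w => by ring
  simp only [hterm, sum_add_distrib, sum_sub_distrib, ← mul_sum, hswap]
  ring

section EmpiricalMeasure

variable {α κ : Type*} [MeasurableSpace α] [MeasurableSingletonClass α] [Fintype κ]

theorem smul_sum_dirac_apply_singleton [DecidableEq α] (c : ℝ≥0∞) (f : κ → α) (z : α) :
    (c • ∑ k, Measure.dirac (f k)) {z} = c * #{k | f k = z} := by
  simp [Set.indicator_apply, sum_boole]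

theorem ae_mem_finset_smul_sum_dirac (c : ℝ≥0∞) {f : κ → α} {S : Finset α} (hf : ∀ k, f k ∈ S) :
    ∀ᵐ y ∂(c • ∑ k, Measure.dirac (f k)), y ∈ S :=
  Measure.ae_smul_measure (ae_finsetSum_measure_iff.2 fun k _ =>
    (ae_dirac_iff S.measurableSet).2 (hf k)) c

theorem Measure.eq_iff_of_ae_mem_finset {μ ν : Measure α} {S : Finset α}
    (hμ : ∀ᵐ y ∂μ, y ∈ S) (hν : ∀ᵐ y ∂ν, y ∈ S) : μ = ν ↔ ∀ z ∈ S, μ {z} = ν {z} := by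
  refine ⟨by rintro rfl; simp, fun h => ?_⟩
  rw [Measure.ae_mem_finset_iff.1 hμ, Measure.ae_mem_finset_iff.1 hν]
  exact sum_congr rfl fun z hz => by rw [h z hz]

end EmpiricalMeasure

/-- The empirical-measure squared MMD with the energy (negative Euclidean
distance) kernel between finite scenario sets `{ζ₁,…,ζ_K}` and `{ω₁,…,ω_M}` in `ℝ^p`,
`(2/(KM)) ∑_{i,j} ‖ζᵢ − ω_j‖ − (1/K²) ∑_{i,i'} ‖ζᵢ − ζᵢ'‖ − (1/M²) ∑_{j,j'} ‖ω_j − ω_{j'}‖`,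
is nonnegative, and it vanishes iff the two empirical measures coincide. -/
theorem stmt_11 (p K M : ℕ) (hK : 0 < K) (hM : 0 < M)
    (ζ : Fin K → EuclideanSpace ℝ (Fin p)) (ω : Fin M → EuclideanSpace ℝ (Fin p))
    (d : ℝ)
    (hd : d = (2 / ((K : ℝ) * (M : ℝ))) * ∑ i : Fin K, ∑ j : Fin M, ‖ζ i - ω j‖
      - ((K : ℝ) ^ 2)⁻¹ * ∑ i : Fin K, ∑ i' : Fin K, ‖ζ i - ζ i'‖
      - ((M : ℝ) ^ 2)⁻¹ * ∑ j : Fin M, ∑ j' : Fin M, ‖ω j - ω j'‖) :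
    0 ≤ d ∧ (d = 0 ↔
      ((K : ENNReal)⁻¹ • ∑ i : Fin K, Measure.dirac (ζ i) : Measure (EuclideanSpace ℝ (Fin p)))
        = (M : ENNReal)⁻¹ • ∑ j : Fin M, Measure.dirac (ω j)) := by
  classical
  set S := univ.image ζ ∪ univ.image ω
  have hζS : ∀ i, ζ i ∈ S := fun i => mem_union_left _ (mem_image_of_mem ζ (mem_univ i))
  have hωS : ∀ j, ω j ∈ S := fun j => mem_union_right _ (mem_image_of_mem ω (mem_univ j))
  set a : EuclideanSpace ℝ (Fin p) → ℝ :=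
    fun z => (K : ℝ)⁻¹ * #{i | ζ i = z} - (M : ℝ)⁻¹ * #{j | ω j = z}
  have hmass : ∑ z ∈ S, a z = 0 := by
    simp only [a, sum_sub_distrib, ← mul_sum, ← Nat.cast_sum,
      ← card_eq_sum_card_fiberwise fun i _ => hζS i, ← card_eq_sum_card_fiberwise fun j _ => hωS j]
    simp [hK.ne', hM.ne']
  have hd' : d = -∑ z ∈ S, ∑ w ∈ S, a z * a w * ‖z - w‖ := by
    rw [hd, sum_sum_comp_eq_sum_sum_card_mul hζS hωS fun z w => ‖z - w‖,
      sum_sum_comp_eq_sum_sum_card_mul hζS hζS fun z w => ‖z - w‖,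
      sum_sum_comp_eq_sum_sum_card_mul hωS hωS fun z w => ‖z - w‖,
      sum_sum_smul_sub_mul_smul_sub S norm_sub_rev]
    ring
  have hμν : ((K : ENNReal)⁻¹ • ∑ i : Fin K, Measure.dirac (ζ i) :
      Measure (EuclideanSpace ℝ (Fin p))) = (M : ENNReal)⁻¹ • ∑ j : Fin M, Measure.dirac (ω j)
      ↔ ∀ z ∈ S, a z = 0 := by
    rw [Measure.eq_iff_of_ae_mem_finset (ae_mem_finset_smul_sum_dirac _ hζS)
      (ae_mem_finset_smul_sum_dirac _ hωS)]
    refine forall₂_congr fun z _ => ?_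
    rw [smul_sum_dirac_apply_singleton, smul_sum_dirac_apply_singleton, sub_eq_zero,
      ← ENNReal.toReal_eq_toReal_iff' (by finiteness) (by finiteness)]
    simp
  exact ⟨by linarith [Finset.sum_sum_mul_norm_sub_nonpos S hmass],
    by rw [hd', neg_eq_zero, Finset.sum_sum_mul_norm_sub_eq_zero_iff S hmass, hμν]⟩
end
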